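/- arXiv:1008.1153 — 5 statements merged into one kernel-verified Lean document; each statement's English description precedes it below -/
import Mathlib

section
/- Let α > 1, V₀'(x) = −|x|^α·H(−x) where H is the Heaviside function (H = 0 on ℝ⁻, H = 1 on ℝ⁺). Define f(z) = (1/2π) ∫₀^{2π} V₀'(z e^{it} + z̄ e^{−it}) e^{−it} dt for z ∈ ℂ. Then f(z) = 2^{α−1} c_α · z·|z|^{α−1}, where c_α = (2/π) ∫₀^{π/2} (cos t)^{α+1} dt. -/
open Real Complex intervalIntegral

/-- Heaviside function: 0 on negatives, 1 on nonnegatives. -/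
noncomputable def Heav (x : ℝ) : ℝ := if x < 0 then 0 else 1

/-- Derivative of the Hertz potential: `V₀'(x) = -|x|^α H(-x)`. -/
noncomputable def V0d (α : ℝ) (x : ℝ) : ℝ := -|x| ^ α * Heav (-x)

namespace DPSAux

/-- The normalized angular profile. -/
noncomputable def m (α s : ℝ) : ℝ := (max (-Real.cos s) 0) ^ α

lemma m_cont {α : ℝ} (hα : 0 ≤ α) : Continuous (m α) :=
  ((Real.continuous_cos.neg).max continuous_const).rpow_const (fun _ => Or.inr hα)

lemma V0d_eq {α : ℝ} (hα : 0 < α) {r : ℝ} (hr : 0 ≤ r) (s : ℝ) :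
    V0d α (r * Real.cos s) = -(r ^ α) * m α s := by
  have hα' : α ≠ 0 := ne_of_gt hα
  unfold V0d Heav m
  rcases le_or_gt (Real.cos s) 0 with hy | hy
  · have h1 : ¬ (-(r * Real.cos s) < 0) := by nlinarith
    have h2 : |r * Real.cos s| = r * (-Real.cos s) := by
      rw [abs_mul, _root_.abs_of_nonneg hr, abs_of_nonpos hy]
    rw [if_neg h1, h2, Real.mul_rpow hr (by linarith), max_eq_left (by linarith)]
    ring
  · have hmax : max (-Real.cos s) 0 = 0 := max_eq_right (by linarith)
    rw [hmax, Real.zero_rpow hα', mul_zero]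
    rcases eq_or_lt_of_le hr with h0 | h0
    · simp [← h0, Real.zero_rpow hα']
    · have : -(r * Real.cos s) < 0 := by nlinarith
      rw [if_pos this, mul_zero]

lemma max_rpow_mul {α : ℝ} (hα : 0 < α) (u : ℝ) :
    (max u 0) ^ α * u = (max u 0) ^ (α + 1) := by
  rcases le_or_gt u 0 with hu | hu
  · rw [max_eq_right hu, Real.zero_rpow (ne_of_gt hα),
      Real.zero_rpow (by positivity), zero_mul]
  · rw [max_eq_left hu.le, Real.rpow_add_one (ne_of_gt hu)]

lemma K_eq {α : ℝ} (hα : 0 < α) :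
    ∫ s in (0:ℝ)..(2*π), (max (-Real.cos s) 0) ^ (α+1)
      = 2 * ∫ t in (0:ℝ)..(π/2), (Real.cos t) ^ (α+1) := by
  have hcont : Continuous fun s => (max (-Real.cos s) 0) ^ (α+1) :=
    ((Real.continuous_cos.neg).max continuous_const).rpow_const
      (fun _ => Or.inr (by positivity))
  have hcc : Continuous fun s : ℝ => (Real.cos s) ^ (α+1) :=
    continuous_cos.rpow_const (fun _ => Or.inr (by positivity))
  have hint : ∀ a b : ℝ, IntervalIntegrable
      (fun s => (max (-Real.cos s) 0) ^ (α+1)) MeasureTheory.volume a b :=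
    fun a b => hcont.intervalIntegrable a b
  have h1 : (∫ s in (0:ℝ)..(π/2), (max (-Real.cos s) 0) ^ (α+1)) = 0 := by
    rw [intervalIntegral.integral_congr (g := fun _ => (0:ℝ))]
    · simp
    · intro x hx
      rw [Set.uIcc_of_le (by positivity)] at hx
      have hc : 0 ≤ Real.cos x := Real.cos_nonneg_of_mem_Icc
        ⟨by linarith [hx.1, Real.pi_pos], hx.2⟩
      simp [max_eq_right (by linarith : -Real.cos x ≤ 0), Real.zero_rpow
        (show α + 1 ≠ 0 by positivity)]
  have h3 : (∫ s in (3*π/2)..(2*π), (max (-Real.cos s) 0) ^ (α+1)) = 0 := by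
    rw [intervalIntegral.integral_congr (g := fun _ => (0:ℝ))]
    · simp
    · intro x hx
      rw [Set.uIcc_of_le (by linarith [Real.pi_pos])] at hx
      have hc : 0 ≤ Real.cos x := by
        rw [← Real.cos_sub_two_pi]
        exact Real.cos_nonneg_of_mem_Icc ⟨by linarith [hx.1], by linarith [hx.2, Real.pi_pos]⟩
      simp [max_eq_right (by linarith : -Real.cos x ≤ 0), Real.zero_rpow
        (show α + 1 ≠ 0 by positivity)]
  have h2 : (∫ s in (π/2)..(3*π/2), (max (-Real.cos s) 0) ^ (α+1))
      = ∫ u in (-(π/2))..(π/2), (Real.cos u) ^ (α+1) := by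
    have hcomp := intervalIntegral.integral_comp_add_right (a := -(π/2)) (b := π/2)
      (fun s => (max (-Real.cos s) 0) ^ (α+1)) π
    have he1 : -(π/2) + π = π/2 := by ring
    have he2 : π/2 + π = 3*π/2 := by ring
    rw [he1, he2] at hcomp
    rw [← hcomp]
    apply intervalIntegral.integral_congr
    intro x hx
    rw [Set.uIcc_of_le (by linarith [Real.pi_pos])] at hx
    have hc : 0 ≤ Real.cos x := Real.cos_nonneg_of_mem_Icc ⟨hx.1, hx.2⟩
    simp only [Real.cos_add_pi, neg_neg]
    rw [max_eq_left hc]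
  have h4 : (∫ u in (-(π/2))..(π/2), (Real.cos u) ^ (α+1))
      = 2 * ∫ t in (0:ℝ)..(π/2), (Real.cos t) ^ (α+1) := by
    have hneg : (∫ u in (-(π/2))..(0:ℝ), (Real.cos u) ^ (α+1))
        = ∫ t in (0:ℝ)..(π/2), (Real.cos t) ^ (α+1) := by
      have := intervalIntegral.integral_comp_neg
        (a := (0:ℝ)) (b := π/2) (fun s : ℝ => (Real.cos s) ^ (α+1))
      simp only [Real.cos_neg, neg_zero] at this
      rw [← this]
    rw [← intervalIntegral.integral_add_adjacent_intervals
      (hcc.intervalIntegrable (-(π/2)) 0) (hcc.intervalIntegrable 0 (π/2)), hneg]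
    ring
  rw [← intervalIntegral.integral_add_adjacent_intervals (hint 0 (π/2)) (hint (π/2) (2*π)),
    ← intervalIntegral.integral_add_adjacent_intervals (hint (π/2) (3*π/2)) (hint (3*π/2) (2*π)),
    h1, h2, h3, h4]
  ring

lemma B_zero {α : ℝ} (hα : 0 ≤ α) :
    (∫ s in (0:ℝ)..(2*π), m α s * Real.sin s) = 0 := by
  have hF : ∀ x : ℝ, m α (2*π - x) * Real.sin (2*π - x) = -(m α x * Real.sin x) := by
    intro x
    rw [Real.sin_two_pi_sub]
    unfold m
    rw [Real.cos_two_pi_sub]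
    ring
  have h := intervalIntegral.integral_comp_sub_left
    (a := (0:ℝ)) (b := 2*π) (fun s => m α s * Real.sin s) (2*π)
  simp only [sub_self, sub_zero] at h
  have h2 : (∫ x in (0:ℝ)..(2*π), m α (2*π - x) * Real.sin (2*π - x))
      = -∫ x in (0:ℝ)..(2*π), m α x * Real.sin x := by
    rw [← intervalIntegral.integral_neg]
    exact intervalIntegral.integral_congr (fun x _ => hF x)
  rw [h2] at h
  linarith

lemma J_eq {α : ℝ} (hα : 0 < α) :
    (∫ s in (0:ℝ)..(2*π), ((m α s : ℝ) : ℂ) * Complex.exp (-(s * Complex.I)))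
      = -(((∫ s in (0:ℝ)..(2*π), (max (-Real.cos s) 0) ^ (α+1) : ℝ)) : ℂ) := by
  have hpt : ∀ s : ℝ, ((m α s : ℝ) : ℂ) * Complex.exp (-(s * Complex.I))
      = ((m α s * Real.cos s : ℝ) : ℂ) - ((m α s * Real.sin s : ℝ) : ℂ) * Complex.I := by
    intro s
    have : (-(↑s * Complex.I) : ℂ) = (↑(-s) : ℂ) * Complex.I := by push_cast; ring
    rw [this, Complex.exp_mul_I]
    push_cast
    rw [Complex.cos_neg, Complex.sin_neg, ← Complex.ofReal_cos, ← Complex.ofReal_sin]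
    ring
  have hm : Continuous (m α) := m_cont hα.le
  have hi1 : IntervalIntegrable (fun s => ((m α s * Real.cos s : ℝ) : ℂ))
      MeasureTheory.volume 0 (2*π) :=
    (Complex.continuous_ofReal.comp (hm.mul continuous_cos)).intervalIntegrable _ _
  have hi2 : IntervalIntegrable (fun s => ((m α s * Real.sin s : ℝ) : ℂ) * Complex.I)
      MeasureTheory.volume 0 (2*π) :=
    ((Complex.continuous_ofReal.comp (hm.mul continuous_sin)).mul
      continuous_const).intervalIntegrable _ _
  rw [intervalIntegral.integral_congr (g := fun s =>
      ((m α s * Real.cos s : ℝ) : ℂ) - ((m α s * Real.sin s : ℝ) : ℂ) * Complex.I)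
      (fun s _ => hpt s),
    intervalIntegral.integral_sub hi1 hi2,
    intervalIntegral.integral_mul_const, intervalIntegral.integral_ofReal, intervalIntegral.integral_ofReal]
  have hA : (∫ s in (0:ℝ)..(2*π), m α s * Real.cos s)
      = -∫ s in (0:ℝ)..(2*π), (max (-Real.cos s) 0) ^ (α+1) := by
    rw [← intervalIntegral.integral_neg]
    apply intervalIntegral.integral_congr
    intro x _
    unfold m
    linear_combination -max_rpow_mul hα (-Real.cos x)
  rw [hA, B_zero hα.le]
  push_cast
  ring

lemma Phi_periodic (α : ℝ) :
    Function.Periodic (fun s : ℝ => ((m α s : ℝ) : ℂ) * Complex.exp (-(s * Complex.I)))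
      (2*π) := by
  intro x
  have hm : m α (x + 2*π) = m α x := by unfold m; rw [Real.cos_add_two_pi]
  have he : Complex.exp (-(↑(x + 2*π) * Complex.I)) = Complex.exp (-(↑x * Complex.I)) := by
    have : (-(↑(x + 2*π) * Complex.I) : ℂ)
        = -(↑x * Complex.I) + -(2*↑π * Complex.I) := by push_cast; ring
    rw [this, Complex.exp_add]
    have h2 : Complex.exp (-(2*↑π * Complex.I)) = 1 := by
      rw [Complex.exp_neg, Complex.exp_two_pi_mul_I, inv_one]
    rw [h2, mul_one]
  simp only [hm, he]

lemma re_eq (z : ℂ) (t : ℝ) :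
    (z * Complex.exp (t * Complex.I) +
      (starRingEnd ℂ) z * Complex.exp (-(t * Complex.I))).re
      = 2 * ‖z‖ * Real.cos (t + Complex.arg z) := by
  have hconj : (starRingEnd ℂ) z * Complex.exp (-(↑t * Complex.I))
      = (starRingEnd ℂ) (z * Complex.exp (↑t * Complex.I)) := by
    rw [map_mul, ← Complex.exp_conj]
    congr 1
    simp [Complex.conj_I]
  rw [hconj, Complex.add_conj, Complex.ofReal_re]
  have hz : z * Complex.exp (↑t * Complex.I)
      = ((‖z‖ : ℝ) : ℂ) * Complex.exp (↑(t + Complex.arg z) * Complex.I) := by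
    conv_lhs => rw [← Complex.norm_mul_exp_arg_mul_I z]
    rw [mul_assoc, ← Complex.exp_add]
    congr 2
    push_cast
    ring
  rw [hz, Complex.re_ofReal_mul, Complex.exp_ofReal_mul_I_re]
  ring

end DPSAux

theorem dps_nonlinearity (α : ℝ) (hα : 1 < α)
    (c : ℝ) (hc : c = (2 / π) * ∫ t in (0:ℝ)..(π/2), (Real.cos t) ^ (α + 1))
    (f : ℂ → ℂ)
    (hf : ∀ z : ℂ, f z = (1 / (2 * π)) •
      ∫ t in (0:ℝ)..(2*π),
        (V0d α (z * Complex.exp (t * Complex.I) +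
                (starRingEnd ℂ) z * Complex.exp (-(t * Complex.I))).re : ℂ) *
        Complex.exp (-(t * Complex.I))) :
    ∀ z : ℂ, f z = (((2:ℝ) ^ (α - 1) * c * ‖z‖ ^ (α - 1) : ℝ) : ℂ) * z := by
  intro z
  have hα0 : (0:ℝ) < α := by linarith
  have hπ : (0:ℝ) < π := Real.pi_pos
  have hK : (∫ s in (0:ℝ)..(2*π), (max (-Real.cos s) 0) ^ (α+1)) = π * c := by
    rw [DPSAux.K_eq hα0, hc]; field_simp
  by_cases hz : z = 0
  · subst hz
    rw [hf]
    simp [V0d, Heav, Real.zero_rpow (ne_of_gt hα0)]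
  · set r : ℝ := ‖z‖ with hr
    set θ : ℝ := Complex.arg z with hθ
    have hr0 : 0 < r := by
      rw [hr]; exact norm_pos_iff.mpr hz
    have hpt : ∀ t : ℝ, (V0d α (z * Complex.exp (t * Complex.I) +
          (starRingEnd ℂ) z * Complex.exp (-(t * Complex.I))).re : ℂ) *
          Complex.exp (-(t * Complex.I))
        = (-((((2*r)^α : ℝ)) : ℂ) * Complex.exp (↑θ * Complex.I)) *
          (((DPSAux.m α (t+θ) : ℝ) : ℂ) * Complex.exp (-(↑(t+θ) * Complex.I))) := by
      intro t
      rw [DPSAux.re_eq z t, ← hr, ← hθ,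
        DPSAux.V0d_eq hα0 (show (0:ℝ) ≤ 2*r by positivity) (t+θ)]
      have hexp : (Complex.exp (-(↑t * Complex.I)) : ℂ)
          = Complex.exp (↑θ * Complex.I) * Complex.exp (-(↑(t+θ) * Complex.I)) := by
        rw [← Complex.exp_add]; congr 1; push_cast; ring
      rw [hexp]
      push_cast
      ring
    have hcongr : (∫ t in (0:ℝ)..(2*π),
          (V0d α (z * Complex.exp (t * Complex.I) +
            (starRingEnd ℂ) z * Complex.exp (-(t * Complex.I))).re : ℂ) *
          Complex.exp (-(t * Complex.I)))
        = ∫ t in (0:ℝ)..(2*π),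
            (-((((2*r)^α : ℝ)) : ℂ) * Complex.exp (↑θ * Complex.I)) *
            (((DPSAux.m α (t+θ) : ℝ) : ℂ) * Complex.exp (-(↑(t+θ) * Complex.I))) :=
      intervalIntegral.integral_congr (fun t _ => hpt t)
    have hshift : (∫ t in (0:ℝ)..(2*π),
          ((DPSAux.m α (t+θ) : ℝ) : ℂ) * Complex.exp (-(↑(t+θ) * Complex.I)))
        = ∫ s in (0:ℝ)..(2*π), ((DPSAux.m α s : ℝ) : ℂ) * Complex.exp (-(↑s * Complex.I)) := by
      have h1 := intervalIntegral.integral_comp_add_right (a := (0:ℝ)) (b := 2*π)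
        (fun s : ℝ => ((DPSAux.m α s : ℝ) : ℂ) * Complex.exp (-(↑s * Complex.I))) θ
      rw [h1, show (0:ℝ) + θ = θ by ring, show 2*π + θ = θ + 2*π by ring,
        (DPSAux.Phi_periodic α).intervalIntegral_add_eq θ 0]
      norm_num
    have hcoef : (1/(2*π)) * ((2*r)^α * (π*c)) = (2:ℝ)^(α-1)*c*r^(α-1)*r := by
      have h2r : (2*r)^α = (2:ℝ)^α * r^α := Real.mul_rpow (by norm_num) hr0.le
      have h2 : (2:ℝ)^α = (2:ℝ)^(α-1) * 2 := by
        rw [← Real.rpow_add_one (by norm_num : (2:ℝ) ≠ 0)]; norm_num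
      have hrα : r^α = r^(α-1) * r := by
        rw [← Real.rpow_add_one (ne_of_gt hr0)]; norm_num
      rw [h2r, h2, hrα]
      field_simp
    have hc2 : ((1/(2*π) * ((2*r)^α * (π*c)) : ℝ) : ℂ)
        = (((2:ℝ)^(α-1)*c*r^(α-1)*r : ℝ) : ℂ) := by rw [hcoef]
    have hzeq : ((r:ℝ) : ℂ) * Complex.exp (↑θ * Complex.I) = z := by
      rw [hr, hθ]; exact Complex.norm_mul_exp_arg_mul_I z
    rw [hf z, hcongr, intervalIntegral.integral_const_mul, hshift,
      DPSAux.J_eq hα0, hK, Complex.real_smul, ← hzeq]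
    push_cast at hc2 ⊢
    linear_combination Complex.exp (↑θ * Complex.I) * hc2
end

section
/- Let α > 1 and let {a_n} ∈ ℓ²(ℤ) be a nontrivial (not identically zero) real solution of the stationary DpS equation −sign(μ) a_n = (a_{n+1}−a_n)|a_{n+1}−a_n|^{α−1} − (a_n−a_{n−1})|a_n−a_{n−1}|^{α−1} with μ ≠ 0. Then sign(μ) = 1; equivalently, sign(μ)·Σ_n a_n² = Σ_n |a_{n+1}−a_n|^{α+1}, so nontrivial ℓ² solutions exist only for μ > 0. -/
open Real

/-- The real fully nonlinear coupling `x ↦ x |x|^{α-1}`. -/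
noncomputable def dpsf (α : ℝ) (x : ℝ) : ℝ := x * |x| ^ (α - 1)

lemma dpsf_mul_self (α : ℝ) (hα : 1 < α) (x : ℝ) :
    x * dpsf α x = |x| ^ (α + 1) := by
  rcases eq_or_ne x 0 with rfl | hx
  · simp [dpsf, Real.zero_rpow (by linarith : α + 1 ≠ 0)]
  · have hx' : 0 < |x| := abs_pos.mpr hx
    unfold dpsf
    calc x * (x * |x| ^ (α - 1)) = |x| ^ (2:ℝ) * |x| ^ (α - 1) := by
          rw [Real.rpow_two, sq_abs]; ring
      _ = |x| ^ (2 + (α - 1)) := (Real.rpow_add hx' _ _).symm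
      _ = |x| ^ (α + 1) := by ring_nf

lemma abs_dpsf (α : ℝ) (hα : 1 < α) (x : ℝ) : |dpsf α x| = |x| ^ α := by
  rcases eq_or_ne x 0 with rfl | hx
  · simp [dpsf, Real.zero_rpow (by linarith : α ≠ 0)]
  · have hx' : 0 < |x| := abs_pos.mpr hx
    unfold dpsf
    rw [abs_mul, abs_of_nonneg (Real.rpow_nonneg (abs_nonneg x) _)]
    calc |x| * |x| ^ (α - 1) = |x| ^ (1:ℝ) * |x| ^ (α - 1) := by
          rw [Real.rpow_one]
      _ = |x| ^ (1 + (α - 1)) := (Real.rpow_add hx' _ _).symm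
      _ = |x| ^ α := by ring_nf

set_option maxHeartbeats 2000000 in
theorem stationary_dps_sign (α : ℝ) (hα : 1 < α) (μ : ℝ) (hμ : μ ≠ 0)
    (a : ℤ → ℝ)
    (hl2 : Summable (fun n : ℤ => (a n) ^ 2))
    (hnt : ∃ n : ℤ, a n ≠ 0)
    (heq : ∀ n : ℤ, -(Real.sign μ) * a n =
      dpsf α (a (n+1) - a n) - dpsf α (a n - a (n-1))) :
    Real.sign μ = 1 ∧
      Real.sign μ * (∑' n : ℤ, (a n) ^ 2) =
        ∑' n : ℤ, |a (n+1) - a n| ^ (α + 1) := by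
  set s := Real.sign μ with hs
  set δ : ℤ → ℝ := fun n => a (n+1) - a n with hδ
  -- shifted square summability
  have hl2' : Summable (fun n : ℤ => (a (n+1)) ^ 2) :=
    ((Equiv.addRight (1:ℤ)).summable_iff (f := fun n : ℤ => (a n) ^ 2)).2 hl2
  have hδ2 : Summable (fun n : ℤ => (δ n) ^ 2) := by
    refine Summable.of_nonneg_of_le (fun n => sq_nonneg _) (fun n => ?_)
      ((hl2'.mul_left 2).add (hl2.mul_left 2))
    simp only [hδ]
    nlinarith [sq_nonneg (a (n+1) + a n)]
  have hsmall : ∀ᶠ n in Filter.cofinite, |δ n| ≤ 1 := by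
    have h := hδ2.tendsto_cofinite_zero
    filter_upwards [h.eventually (eventually_le_nhds (by norm_num : (0:ℝ) < 1))]
      with n hn
    nlinarith [abs_nonneg (δ n), sq_abs (δ n)]
  -- summability of |δ|^(α+1)
  have hA : Summable (fun n : ℤ => |δ n| ^ (α + 1)) := by
    apply Summable.of_norm_bounded_eventually (g := fun n => (δ n)^2) hδ2
    filter_upwards [hsmall] with n hn
    rw [Real.norm_eq_abs, abs_of_nonneg (Real.rpow_nonneg (abs_nonneg _) _)]
    rcases eq_or_ne (δ n) 0 with h0 | h0
    · simp [h0, Real.zero_rpow (by linarith : α + 1 ≠ 0)]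
    · calc |δ n| ^ (α + 1) ≤ |δ n| ^ (2:ℝ) :=
            Real.rpow_le_rpow_of_exponent_ge (abs_pos.mpr h0) hn (by linarith)
        _ = (δ n)^2 := by rw [Real.rpow_two, sq_abs]
  -- generic summability of b n * dpsf α (δ n) for square-summable b
  have hkey : ∀ b : ℤ → ℝ, Summable (fun n : ℤ => (b n)^2) →
      Summable (fun n : ℤ => b n * dpsf α (δ n)) := by
    intro b hb
    apply Summable.of_norm_bounded_eventually (g := fun n => (b n)^2 + (δ n)^2)
      (hb.add hδ2)
    filter_upwards [hsmall] with n hn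
    rw [Real.norm_eq_abs, abs_mul, abs_dpsf α hα]
    have h1 : |δ n| ^ α ≤ |δ n| := by
      rcases eq_or_ne (δ n) 0 with h0 | h0
      · simp [h0, Real.zero_rpow (by linarith : α ≠ 0)]
      · calc |δ n| ^ α ≤ |δ n| ^ (1:ℝ) :=
              Real.rpow_le_rpow_of_exponent_ge (abs_pos.mpr h0) hn (by linarith)
          _ = |δ n| := Real.rpow_one _
    have h2 : |b n| * |δ n| ^ α ≤ |b n| * |δ n| :=
      mul_le_mul_of_nonneg_left h1 (abs_nonneg _)
    nlinarith [sq_nonneg (|b n| - |δ n|), sq_abs (b n), sq_abs (δ n)]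
  have hB : Summable (fun n : ℤ => a n * dpsf α (δ n)) := hkey a hl2
  have hC : Summable (fun n : ℤ => a (n+1) * dpsf α (δ n)) := hkey _ hl2'
  -- the shifted term
  have hGrw : ∀ n : ℤ, a n * dpsf α (a n - a (n-1)) =
      (fun m : ℤ => a (m+1) * dpsf α (δ m)) ((Equiv.subRight (1:ℤ)) n) := by
    intro n
    simp only [Equiv.subRight_apply, hδ]
    norm_num
  have hG : Summable (fun n : ℤ => a n * dpsf α (a n - a (n-1))) := by
    rw [show (fun n : ℤ => a n * dpsf α (a n - a (n-1))) =
        (fun m : ℤ => a (m+1) * dpsf α (δ m)) ∘ (Equiv.subRight (1:ℤ)) from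
        funext hGrw]
    exact ((Equiv.subRight (1:ℤ)).summable_iff).2 hC
  have hGsum : ∑' n : ℤ, a n * dpsf α (a n - a (n-1)) =
      ∑' n : ℤ, a (n+1) * dpsf α (δ n) := by
    rw [tsum_congr hGrw]
    exact (Equiv.subRight (1:ℤ)).tsum_eq (fun m : ℤ => a (m+1) * dpsf α (δ m))
  -- multiply the equation by a n and sum
  have hpt : ∀ n : ℤ, -s * (a n)^2 =
      a n * dpsf α (δ n) - a n * dpsf α (a n - a (n-1)) := by
    intro n
    have := heq n
    calc -s * (a n)^2 = (-s * a n) * a n := by ring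
      _ = (dpsf α (a (n+1) - a n) - dpsf α (a n - a (n-1))) * a n := by rw [this]
      _ = a n * dpsf α (δ n) - a n * dpsf α (a n - a (n-1)) := by
          simp only [hδ]; ring
  have hmain : -s * (∑' n : ℤ, (a n)^2) = -(∑' n : ℤ, |δ n| ^ (α + 1)) := by
    calc -s * (∑' n : ℤ, (a n)^2) = ∑' n : ℤ, -s * (a n)^2 := (tsum_mul_left).symm
      _ = ∑' n : ℤ, (a n * dpsf α (δ n) - a n * dpsf α (a n - a (n-1))) :=
          tsum_congr hpt
      _ = (∑' n : ℤ, a n * dpsf α (δ n)) -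
          (∑' n : ℤ, a n * dpsf α (a n - a (n-1))) := Summable.tsum_sub hB hG
      _ = (∑' n : ℤ, a n * dpsf α (δ n)) -
          (∑' n : ℤ, a (n+1) * dpsf α (δ n)) := by rw [hGsum]
      _ = ∑' n : ℤ, (a n * dpsf α (δ n) - a (n+1) * dpsf α (δ n)) :=
          (Summable.tsum_sub hB hC).symm
      _ = ∑' n : ℤ, -(|δ n| ^ (α + 1)) := by
          apply tsum_congr
          intro n
          have := dpsf_mul_self α hα (δ n)
          simp only [hδ] at this ⊢
          nlinarith [this]
      _ = -(∑' n : ℤ, |δ n| ^ (α + 1)) := tsum_neg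
  have hiden : s * (∑' n : ℤ, (a n)^2) = ∑' n : ℤ, |δ n| ^ (α + 1) := by
    linarith [hmain]
  obtain ⟨n₀, hn₀⟩ := hnt
  have hpos : 0 < ∑' n : ℤ, (a n)^2 :=
    Summable.tsum_pos hl2 (fun n => sq_nonneg _) n₀ (by positivity)
  have hRnn : 0 ≤ ∑' n : ℤ, |δ n| ^ (α + 1) :=
    tsum_nonneg (fun n => Real.rpow_nonneg (abs_nonneg _) _)
  have hs1 : s = 1 := by
    rcases lt_trichotomy μ 0 with h | h | h
    · exfalso
      rw [hs, Real.sign_of_neg h] at hiden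
      nlinarith
    · exact absurd h hμ
    · rw [hs, Real.sign_of_pos h]
  exact ⟨hs1, hiden⟩
end

section
/- Let α > 1. The period-2 sequence a_n = 2^{(α+1)/(1−α)}·(−1)^n solves the stationary DpS equation −a_n = (a_{n+1}−a_n)|a_{n+1}−a_n|^{α−1} − (a_n−a_{n−1})|a_n−a_{n−1}|^{α−1}. -/
open Real

theorem period_two_orbit (α : ℝ) (hα : 1 < α)
    (a : ℤ → ℝ)
    (ha : ∀ n : ℤ, a n = (2:ℝ) ^ ((α + 1)/(1 - α)) * (-1:ℝ) ^ n) :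
    ∀ n : ℤ, -a n = dpsf α (a (n+1) - a n) - dpsf α (a n - a (n-1)) := by
  intro n
  set c : ℝ := (2:ℝ) ^ ((α + 1)/(1 - α)) with hcdef
  have hc : (0:ℝ) < c := rpow_pos_of_pos two_pos _
  have hne : (1:ℝ) - α ≠ 0 := by intro h; nlinarith
  have h2c : 2 * c = (2:ℝ) ^ ((2:ℝ)/(1 - α)) := by
    rw [hcdef, show (2:ℝ) * 2 ^ ((α + 1)/(1 - α)) = 2 ^ (1:ℝ) * 2 ^ ((α + 1)/(1 - α)) by
      norm_num, ← rpow_add two_pos]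
    congr 1
    field_simp
    ring
  have hkey : 4 * (2 * c) ^ (α - 1) = 1 := by
    rw [h2c, ← rpow_mul (by norm_num : (0:ℝ) ≤ 2)]
    have h3 : (2:ℝ)/(1 - α) * (α - 1) = -2 := by field_simp; ring
    rw [h3, show (-2:ℝ) = ((-2:ℤ):ℝ) by norm_num, rpow_intCast]
    norm_num
  have habs : |2 * c| = 2 * c := abs_of_pos (by linarith)
  have h1 : a (n+1) = -a n := by
    rw [ha (n+1), ha n, zpow_add_one₀ (by norm_num : (-1:ℝ) ≠ 0)]; ring
  have h2 : a (n-1) = -a n := by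
    rw [ha (n-1), ha n, zpow_sub_one₀ (by norm_num : (-1:ℝ) ≠ 0)]; ring
  rw [h1, h2, dpsf, dpsf]
  have he : a n = c ∨ a n = -c := by
    rcases Int.even_or_odd n with h | h
    · left; rw [ha n, h.neg_one_zpow]; ring
    · right; rw [ha n, h.neg_one_zpow]; ring
  rcases he with h | h <;> rw [h]
  · have : -c - c = -(2*c) := by ring
    rw [this, abs_neg, show c - -c = 2*c by ring, habs]
    nlinarith [hkey]
  · rw [show -(-c) - -c = 2*c by ring, show -c - -(-c) = -(2*c) by ring, abs_neg, habs]
    nlinarith [hkey]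
end

section
/- Let α > 1 and a = (1 + 2^α)^{1/(1−α)}. The period-3 sequence {a_n} = {…, 0, a, −a, 0, a, −a, …} (i.e. a_{3k}=0, a_{3k+1}=a, a_{3k+2}=−a) solves the stationary DpS equation −a_n = (a_{n+1}−a_n)|a_{n+1}−a_n|^{α−1} − (a_n−a_{n−1})|a_n−a_{n−1}|^{α−1}. -/
open Real

theorem period_three_orbit (α : ℝ) (hα : 1 < α)
    (a : ℝ) (ha : a = (1 + (2:ℝ) ^ α) ^ (1/(1 - α)))
    (s : ℤ → ℝ)
    (h0 : ∀ k : ℤ, s (3*k) = 0)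
    (h1 : ∀ k : ℤ, s (3*k+1) = a)
    (h2 : ∀ k : ℤ, s (3*k+2) = -a) :
    ∀ n : ℤ, -s n = dpsf α (s (n+1) - s n) - dpsf α (s n - s (n-1)) := by
  have hA : (0:ℝ) < 1 + (2:ℝ)^α := by positivity
  have hapos : 0 < a := by rw [ha]; positivity
  have h1α : (1:ℝ) - α ≠ 0 := by linarith
  have hkey : (1 + (2:ℝ)^α) * a ^ α = a := by
    rw [ha, ← Real.rpow_mul hA.le]
    nth_rewrite 1 [← Real.rpow_one (1 + (2:ℝ)^α)]
    rw [← Real.rpow_add hA]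
    congr 1
    field_simp
    ring
  have dA : dpsf α a = a ^ α := by
    unfold dpsf
    rw [abs_of_pos hapos]
    nth_rewrite 1 [← Real.rpow_one a]
    rw [← Real.rpow_add hapos]
    ring_nf
  have d2A : dpsf α (2*a) = 2^α * a ^ α := by
    unfold dpsf
    have h2a : (0:ℝ) < 2*a := by linarith
    rw [abs_of_pos h2a]
    nth_rewrite 1 [← Real.rpow_one (2*a)]
    rw [← Real.rpow_add h2a]
    have : (1:ℝ) + (α - 1) = α := by ring
    rw [this, Real.mul_rpow (by norm_num) hapos.le]
  have dodd : ∀ x : ℝ, dpsf α (-x) = -dpsf α x := by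
    intro x; unfold dpsf; rw [abs_neg]; ring
  intro n
  obtain ⟨k, hk⟩ : ∃ k : ℤ, n = 3*k ∨ n = 3*k+1 ∨ n = 3*k+2 := ⟨n / 3, by omega⟩
  rcases hk with hk | hk | hk
  · subst hk
    have e1 : (3*k : ℤ) - 1 = 3*(k-1)+2 := by ring
    rw [h0 k, h1 k, e1, h2 (k-1)]
    simp
  · subst hk
    have e1 : (3*k : ℤ) + 1 + 1 = 3*k+2 := by ring
    have e2 : (3*k : ℤ) + 1 - 1 = 3*k := by ring
    rw [h1 k, e1, h2 k, e2, h0 k]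
    have : -a - a = -(2*a) := by ring
    rw [this, dodd, d2A, sub_zero, dA]
    linarith [hkey]
  · subst hk
    have e1 : (3*k : ℤ) + 2 + 1 = 3*(k+1) := by ring
    have e2 : (3*k : ℤ) + 2 - 1 = 3*k+1 := by ring
    rw [h2 k, e1, h0 (k+1), e2, h1 k]
    have : (0:ℝ) - -a = a := by ring
    rw [this, dA]
    have : -a - a = -(2*a) := by ring
    rw [this, dodd, d2A]
    linarith [hkey]
end

section
/- Let α > 1 and V₀'(x) = −|x|^α H(−x). For q ∈ [0, π], with ζ*(u) = (2/π)∫₀^π u(ξ) sin ξ dξ, one has ζ*[V₀'(sin(ξ+q) − sin ξ) − V₀'(sin ξ − sin(ξ−q))] = −(2 sin(q/2))^{α+1} c_α, where c_α = (2/π)∫₀^{π/2} (cos t)^{α+1} dt. -/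
open Real intervalIntegral

/-- negative part to the α power -/
noncomputable def NP (α x : ℝ) : ℝ := max (-x) 0 ^ α

lemma NP_cont (α : ℝ) (hα : 0 < α) : Continuous (NP α) := by
  have h1 : Continuous (fun x : ℝ => x ^ α) := by
    rw [continuous_iff_continuousAt]
    intro x
    exact Real.continuousAt_rpow_const x α (Or.inr hα.le)
  exact h1.comp (continuous_neg.max continuous_const)

lemma rpow_succ' (α x : ℝ) (hx : 0 ≤ x) (hα : 0 < α) : x ^ (α + 1) = x ^ α * x := by
  rcases eq_or_lt_of_le hx with h | h
  · simp [← h, Real.zero_rpow, hα.ne', (by positivity : α + 1 ≠ 0)]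
  · rw [Real.rpow_add_one h.ne']

lemma V0d_eq_NP (α : ℝ) (hα : 0 < α) (x : ℝ) : V0d α x = -(NP α x) := by
  unfold V0d Heav NP
  rcases le_or_gt x 0 with h | h
  · rw [if_neg (by linarith), abs_of_nonpos h, max_eq_left (by linarith)]
    ring
  · rw [if_pos (by linarith), max_eq_right (by linarith), Real.zero_rpow hα.ne']
    ring

lemma NP_smul (α : ℝ) (hα : 0 < α) (s c : ℝ) (hs : 0 ≤ s) :
    NP α (s * c) = s ^ α * NP α c := by
  unfold NP
  have h1 : max (-(s * c)) 0 = s * max (-c) 0 := by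
    rw [mul_max_of_nonneg _ _ hs, mul_zero, mul_neg]
  rw [h1, Real.mul_rpow hs (le_max_right _ _)]

lemma rpow_cont (α : ℝ) (hα : 0 < α) : Continuous (fun x : ℝ => x ^ α) := by
  rw [continuous_iff_continuousAt]
  intro x
  exact Real.continuousAt_rpow_const x α (Or.inr hα.le)

lemma key_integral (α : ℝ) (hα : 1 < α) (a : ℝ) (ha0 : 0 ≤ a) (ha : a ≤ π/2) :
    (∫ ξ in (0:ℝ)..π, (NP α (Real.cos (ξ + a)) - NP α (Real.cos (ξ - a))) * Real.sin ξ)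
      = 2 * Real.sin a * ∫ t in (0:ℝ)..(π/2), Real.cos t ^ (α + 1) := by
  have hα0 : (0:ℝ) < α := by linarith
  have hπ := Real.pi_pos
  have hNP : Continuous (NP α) := NP_cont α hα0
  have hr : Continuous (fun x : ℝ => x ^ α) := rpow_cont α hα0
  have hr1 : Continuous (fun x : ℝ => x ^ (α + 1)) := rpow_cont (α+1) (by linarith)
  have cF1 : Continuous fun u : ℝ => NP α (Real.cos u) * Real.sin (u - a) :=
    (hNP.comp Real.continuous_cos).mul (Real.continuous_sin.comp (continuous_sub_right a))
  have cF2 : Continuous fun u : ℝ => NP α (Real.cos u) * Real.sin (u + a) :=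
    (hNP.comp Real.continuous_cos).mul (Real.continuous_sin.comp (continuous_add_right a))
  have cG1 : Continuous fun v : ℝ => Real.sin v ^ α * Real.cos (v - a) :=
    (hr.comp Real.continuous_sin).mul (Real.continuous_cos.comp (continuous_sub_right a))
  have cG2 : Continuous fun v : ℝ => Real.sin v ^ α * Real.cos (v + a) :=
    (hr.comp Real.continuous_sin).mul (Real.continuous_cos.comp (continuous_add_right a))
  have cH : Continuous fun w : ℝ => Real.sin a * (Real.cos w ^ α * Real.cos w)
      - Real.cos a * (Real.cos w ^ α * Real.sin w) :=
    ((continuous_const.mul ((hr.comp Real.continuous_cos).mul Real.continuous_cos)).sub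
      (continuous_const.mul ((hr.comp Real.continuous_cos).mul Real.continuous_sin)))
  have cK : Continuous fun t : ℝ => Real.cos t ^ (α + 1) := hr1.comp Real.continuous_cos
  -- Step A
  have hA : (∫ ξ in (0:ℝ)..π, NP α (Real.cos (ξ + a)) * Real.sin ξ)
      = ∫ v in (0:ℝ)..(π/2 + a), Real.sin v ^ α * Real.cos (v - a) := by
    have e1 : (∫ ξ in (0:ℝ)..π, NP α (Real.cos (ξ + a)) * Real.sin ξ)
        = ∫ ξ in (0:ℝ)..π, (fun u => NP α (Real.cos u) * Real.sin (u - a)) (ξ + a) :=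
      intervalIntegral.integral_congr (fun ξ _ => by simp)
    rw [e1, intervalIntegral.integral_comp_add_right
      (fun u => NP α (Real.cos u) * Real.sin (u - a)) a, zero_add]
    rw [← intervalIntegral.integral_add_adjacent_intervals (a := a) (b := π/2) (c := π + a)
      (cF1.intervalIntegrable _ _) (cF1.intervalIntegrable _ _)]
    have z1 : (∫ u in a..(π/2), NP α (Real.cos u) * Real.sin (u - a)) = 0 := by
      rw [intervalIntegral.integral_congr (g := fun _ => (0:ℝ)) ?_,
        intervalIntegral.integral_zero]
      intro u hu
      rw [Set.uIcc_of_le (by linarith)] at hu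
      have hcos : 0 ≤ Real.cos u :=
        Real.cos_nonneg_of_mem_Icc ⟨by linarith [hu.1], hu.2⟩
      simp only [NP]
      rw [max_eq_right (by linarith), Real.zero_rpow hα0.ne', zero_mul]
    rw [z1, zero_add]
    have e2 : (∫ u in (π/2)..(π + a), NP α (Real.cos u) * Real.sin (u - a))
        = ∫ u in (π/2)..(π + a), (-Real.cos u) ^ α * Real.sin (u - a) := by
      apply intervalIntegral.integral_congr
      intro u hu
      rw [Set.uIcc_of_le (by linarith)] at hu
      have hcos : Real.cos u ≤ 0 :=
        Real.cos_nonpos_of_pi_div_two_le_of_le hu.1 (by linarith [hu.2])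
      simp only [NP]
      rw [max_eq_left (by linarith)]
    rw [e2]
    have e3 := intervalIntegral.integral_comp_add_right (a := 0) (b := π/2 + a)
      (fun u => (-Real.cos u) ^ α * Real.sin (u - a)) (π/2)
    rw [zero_add, show π/2 + a + π/2 = π + a by ring] at e3
    rw [← e3]
    apply intervalIntegral.integral_congr
    intro v _
    have c1 : -Real.cos (v + π/2) = Real.sin v := by
      rw [Real.cos_add_pi_div_two]; ring
    have c2 : Real.sin (v + π/2 - a) = Real.cos (v - a) := by
      rw [show v + π/2 - a = (v - a) + π/2 by ring, Real.sin_add_pi_div_two]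
    simp only []
    rw [c1, c2]
  -- Step B
  have hB : (∫ ξ in (0:ℝ)..π, NP α (Real.cos (ξ - a)) * Real.sin ξ)
      = ∫ v in (0:ℝ)..(π/2 - a), Real.sin v ^ α * Real.cos (v + a) := by
    have e1 : (∫ ξ in (0:ℝ)..π, NP α (Real.cos (ξ - a)) * Real.sin ξ)
        = ∫ ξ in (0:ℝ)..π, (fun u => NP α (Real.cos u) * Real.sin (u + a)) (ξ - a) :=
      intervalIntegral.integral_congr (fun ξ _ => by simp)
    rw [e1, intervalIntegral.integral_comp_sub_right
      (fun u => NP α (Real.cos u) * Real.sin (u + a)) a, zero_sub]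
    rw [← intervalIntegral.integral_add_adjacent_intervals (a := -a) (b := π/2) (c := π - a)
      (cF2.intervalIntegrable _ _) (cF2.intervalIntegrable _ _)]
    have z1 : (∫ u in (-a)..(π/2), NP α (Real.cos u) * Real.sin (u + a)) = 0 := by
      rw [intervalIntegral.integral_congr (g := fun _ => (0:ℝ)) ?_,
        intervalIntegral.integral_zero]
      intro u hu
      rw [Set.uIcc_of_le (by linarith)] at hu
      have hcos : 0 ≤ Real.cos u :=
        Real.cos_nonneg_of_mem_Icc ⟨by linarith [hu.1], hu.2⟩
      simp only [NP]
      rw [max_eq_right (by linarith), Real.zero_rpow hα0.ne', zero_mul]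
    rw [z1, zero_add]
    have e2 : (∫ u in (π/2)..(π - a), NP α (Real.cos u) * Real.sin (u + a))
        = ∫ u in (π/2)..(π - a), (-Real.cos u) ^ α * Real.sin (u + a) := by
      apply intervalIntegral.integral_congr
      intro u hu
      rw [Set.uIcc_of_le (by linarith)] at hu
      have hcos : Real.cos u ≤ 0 :=
        Real.cos_nonpos_of_pi_div_two_le_of_le hu.1 (by linarith [hu.2])
      simp only [NP]
      rw [max_eq_left (by linarith)]
    rw [e2]
    have e3 := intervalIntegral.integral_comp_add_right (a := 0) (b := π/2 - a)
      (fun u => (-Real.cos u) ^ α * Real.sin (u + a)) (π/2)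
    rw [zero_add, show π/2 - a + π/2 = π - a by ring] at e3
    rw [← e3]
    apply intervalIntegral.integral_congr
    intro v _
    have c1 : -Real.cos (v + π/2) = Real.sin v := by
      rw [Real.cos_add_pi_div_two]; ring
    have c2 : Real.sin (v + π/2 + a) = Real.cos (v + a) := by
      rw [show v + π/2 + a = (v + a) + π/2 by ring, Real.sin_add_pi_div_two]
    simp only []
    rw [c1, c2]
  -- split left side
  have hsplit : (∫ ξ in (0:ℝ)..π,
        (NP α (Real.cos (ξ + a)) - NP α (Real.cos (ξ - a))) * Real.sin ξ)
      = (∫ ξ in (0:ℝ)..π, NP α (Real.cos (ξ + a)) * Real.sin ξ)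
        - ∫ ξ in (0:ℝ)..π, NP α (Real.cos (ξ - a)) * Real.sin ξ := by
    have i3 : IntervalIntegrable (fun ξ : ℝ => NP α (Real.cos (ξ + a)) * Real.sin ξ)
        MeasureTheory.volume 0 π :=
      ((hNP.comp (Real.continuous_cos.comp (continuous_add_right a))).mul
        Real.continuous_sin).intervalIntegrable _ _
    have i4 : IntervalIntegrable (fun ξ : ℝ => NP α (Real.cos (ξ - a)) * Real.sin ξ)
        MeasureTheory.volume 0 π :=
      ((hNP.comp (Real.continuous_cos.comp (continuous_sub_right a))).mul
        Real.continuous_sin).intervalIntegrable _ _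
    rw [← intervalIntegral.integral_sub i3 i4]
    exact intervalIntegral.integral_congr (fun ξ _ => by ring)
  -- split A at π/2 - a
  have hA2 : (∫ v in (0:ℝ)..(π/2 + a), Real.sin v ^ α * Real.cos (v - a))
      = (∫ v in (0:ℝ)..(π/2 - a), Real.sin v ^ α * Real.cos (v - a))
        + ∫ v in (π/2 - a)..(π/2 + a), Real.sin v ^ α * Real.cos (v - a) :=
    (intervalIntegral.integral_add_adjacent_intervals
      (cG1.intervalIntegrable _ _) (cG1.intervalIntegrable _ _)).symm
  -- piece 1
  have hP1 : (∫ v in (0:ℝ)..(π/2 - a), Real.sin v ^ α * Real.cos (v - a))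
        - (∫ v in (0:ℝ)..(π/2 - a), Real.sin v ^ α * Real.cos (v + a))
      = 2 * Real.sin a * ∫ t in a..(π/2), Real.cos t ^ (α + 1) := by
    rw [← intervalIntegral.integral_sub
      (cG1.intervalIntegrable _ _) (cG2.intervalIntegrable _ _)]
    have e : Set.EqOn
        (fun v => Real.sin v ^ α * Real.cos (v - a) - Real.sin v ^ α * Real.cos (v + a))
        (fun v => 2 * Real.sin a * Real.cos (π/2 - v) ^ (α + 1))
        (Set.uIcc 0 (π/2 - a)) := by
      intro v hv
      rw [Set.uIcc_of_le (by linarith)] at hv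
      have hs : 0 ≤ Real.sin v :=
        Real.sin_nonneg_of_nonneg_of_le_pi hv.1 (by linarith [hv.2])
      have hv1 : Real.cos (v - a) - Real.cos (v + a) = 2 * Real.sin v * Real.sin a := by
        rw [Real.cos_sub, Real.cos_add]; ring
      have hv2 : Real.sin v ^ (α + 1) = Real.sin v ^ α * Real.sin v :=
        rpow_succ' α _ hs hα0
      simp only [Real.cos_pi_div_two_sub]
      calc Real.sin v ^ α * Real.cos (v - a) - Real.sin v ^ α * Real.cos (v + a)
          = Real.sin v ^ α * (Real.cos (v - a) - Real.cos (v + a)) := by ring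
        _ = Real.sin v ^ α * (2 * Real.sin v * Real.sin a) := by rw [hv1]
        _ = 2 * Real.sin a * (Real.sin v ^ α * Real.sin v) := by ring
        _ = 2 * Real.sin a * Real.sin v ^ (α + 1) := by rw [← hv2]
    rw [intervalIntegral.integral_congr e, intervalIntegral.integral_const_mul]
    congr 1
    have e2 := intervalIntegral.integral_comp_sub_left (a := 0) (b := π/2 - a)
      (fun t => Real.cos t ^ (α + 1)) (π/2)
    rw [show π/2 - (π/2 - a) = a by ring, sub_zero] at e2
    exact e2
  -- piece 2
  have hP2 : (∫ v in (π/2 - a)..(π/2 + a), Real.sin v ^ α * Real.cos (v - a))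
      = 2 * Real.sin a * ∫ t in (0:ℝ)..a, Real.cos t ^ (α + 1) := by
    have e := intervalIntegral.integral_comp_add_right (a := -a) (b := a)
      (fun v => Real.sin v ^ α * Real.cos (v - a)) (π/2)
    rw [show -a + π/2 = π/2 - a by ring, show a + π/2 = π/2 + a by ring] at e
    rw [← e]
    have e2 : Set.EqOn
        (fun w => Real.sin (w + π/2) ^ α * Real.cos (w + π/2 - a))
        (fun w => Real.sin a * (Real.cos w ^ α * Real.cos w)
          - Real.cos a * (Real.cos w ^ α * Real.sin w)) (Set.uIcc (-a) a) := by
      intro w _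
      have c1 : Real.sin (w + π/2) = Real.cos w := Real.sin_add_pi_div_two w
      have c2 : Real.cos (w + π/2 - a) = -Real.sin (w - a) := by
        rw [show w + π/2 - a = (w - a) + π/2 by ring, Real.cos_add_pi_div_two]
      simp only []
      rw [c1, c2, Real.sin_sub]; ring
    rw [intervalIntegral.integral_congr e2]
    rw [← intervalIntegral.integral_add_adjacent_intervals (a := -a) (b := 0) (c := a)
      (cH.intervalIntegrable _ _) (cH.intervalIntegrable _ _)]
    have e3 := intervalIntegral.integral_comp_neg (a := 0) (b := a)
      (fun w => Real.sin a * (Real.cos w ^ α * Real.cos w)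
        - Real.cos a * (Real.cos w ^ α * Real.sin w))
    rw [neg_zero] at e3
    rw [← e3]
    have iH : IntervalIntegrable (fun x : ℝ =>
        Real.sin a * (Real.cos (-x) ^ α * Real.cos (-x))
          - Real.cos a * (Real.cos (-x) ^ α * Real.sin (-x))) MeasureTheory.volume 0 a :=
      (cH.comp continuous_neg).intervalIntegrable _ _
    rw [← intervalIntegral.integral_add iH (cH.intervalIntegrable _ _)]
    have e4 : Set.EqOn
        (fun x => (Real.sin a * (Real.cos (-x) ^ α * Real.cos (-x))
            - Real.cos a * (Real.cos (-x) ^ α * Real.sin (-x)))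
          + (Real.sin a * (Real.cos x ^ α * Real.cos x)
            - Real.cos a * (Real.cos x ^ α * Real.sin x)))
        (fun x => 2 * Real.sin a * Real.cos x ^ (α + 1)) (Set.uIcc 0 a) := by
      intro x hx
      rw [Set.uIcc_of_le (by linarith)] at hx
      have hc : 0 ≤ Real.cos x :=
        Real.cos_nonneg_of_mem_Icc ⟨by linarith [hx.1], by linarith [hx.2]⟩
      have hx2 : Real.cos x ^ (α + 1) = Real.cos x ^ α * Real.cos x :=
        rpow_succ' α _ hc hα0
      simp only [Real.cos_neg, Real.sin_neg]
      rw [hx2]; ring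
    rw [intervalIntegral.integral_congr e4, intervalIntegral.integral_const_mul]
  -- combine
  have hK : (∫ t in (0:ℝ)..a, Real.cos t ^ (α + 1))
        + (∫ t in a..(π/2), Real.cos t ^ (α + 1))
      = ∫ t in (0:ℝ)..(π/2), Real.cos t ^ (α + 1) :=
    intervalIntegral.integral_add_adjacent_intervals
      (cK.intervalIntegrable _ _) (cK.intervalIntegrable _ _)
  rw [hsplit, hA, hB, hA2]
  linear_combination hP1 + hP2 + (2 * Real.sin a) * hK

theorem zeta_star_dispersion (α : ℝ) (hα : 1 < α)
    (c : ℝ) (hc : c = (2 / π) * ∫ t in (0:ℝ)..(π/2), (Real.cos t) ^ (α + 1))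
    (q : ℝ) (hq : q ∈ Set.Icc 0 π) :
    (2 / π) * ∫ ξ in (0:ℝ)..π,
        (V0d α (Real.sin (ξ + q) - Real.sin ξ) -
         V0d α (Real.sin ξ - Real.sin (ξ - q))) * Real.sin ξ
      = -((2 * Real.sin (q/2)) ^ (α + 1)) * c := by
  obtain ⟨hq0, hqπ⟩ := hq
  have hα0 : (0:ℝ) < α := by linarith
  set a := q / 2 with ha_def
  have ha0 : 0 ≤ a := by positivity
  have ha2 : a ≤ π / 2 := by rw [ha_def]; linarith
  have hsa : 0 ≤ Real.sin a :=
    Real.sin_nonneg_of_nonneg_of_le_pi ha0 (by linarith [Real.pi_pos])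
  set s := 2 * Real.sin a with hs_def
  have hs0 : 0 ≤ s := by positivity
  -- rewrite the integrand
  have h1 : ∀ ξ : ℝ, Real.sin (ξ + q) - Real.sin ξ = s * Real.cos (ξ + a) := by
    intro ξ
    rw [show ξ + q = ξ + 2 * a from by rw [ha_def]; ring, Real.sin_add, Real.cos_add,
      Real.sin_two_mul, Real.cos_two_mul, hs_def]
    linear_combination (2 * Real.sin ξ) * (Real.sin_sq_add_cos_sq a)
  have h2 : ∀ ξ : ℝ, Real.sin ξ - Real.sin (ξ - q) = s * Real.cos (ξ - a) := by
    intro ξ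
    rw [show ξ - q = ξ - 2 * a from by rw [ha_def]; ring, Real.sin_sub, Real.cos_sub,
      Real.sin_two_mul, Real.cos_two_mul, hs_def]
    linear_combination (-(2 * Real.sin ξ)) * (Real.sin_sq_add_cos_sq a)
  have h3 : ∀ ξ : ℝ,
      (V0d α (Real.sin (ξ + q) - Real.sin ξ) - V0d α (Real.sin ξ - Real.sin (ξ - q)))
        * Real.sin ξ
      = -(s ^ α) * ((NP α (Real.cos (ξ + a)) - NP α (Real.cos (ξ - a))) * Real.sin ξ) := by
    intro ξ
    rw [h1 ξ, h2 ξ, V0d_eq_NP α hα0, V0d_eq_NP α hα0, NP_smul α hα0 s _ hs0,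
      NP_smul α hα0 s _ hs0]
    ring
  rw [intervalIntegral.integral_congr (g := fun ξ =>
      -(s ^ α) * ((NP α (Real.cos (ξ + a)) - NP α (Real.cos (ξ - a))) * Real.sin ξ))
      (fun ξ _ => h3 ξ),
    intervalIntegral.integral_const_mul, key_integral α hα a ha0 ha2, hc]
  rw [show (2:ℝ) * Real.sin (q/2) = s from rfl]
  rw [rpow_succ' α s hs0 hα0]
  ring
end
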